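/- One has range d_1 ⊆ ker d_2, and the quotient k-vector space ker d_2 / range d_1 is finite dimensional of dimension n − 1. (This is the computation HH²(Δ) ≅ k^{n−1} of the degree-2 Hochschild cohomology of the diagonal bimodule of the KLRW algebra with n punctures.) -/

import Mathlib

/-- The index set `S_1 = {s_i} ∪ {p_{i+1}} ∪ {q_i}` (here `p i` stands for `p_{i+1}`). -/
inductive S1 (n : ℕ) where
  | s (i : Fin (n + 1))
  | p (i : Fin n)
  | q (i : Fin n)

/-- The index sets `S_2` and `S_3`: the ambiguities `P^m_{i+1}, Q^m_i, sP^m_{i+1}, sQ^m_i`. -/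
inductive Shi (n : ℕ) where
  | P (i : Fin n)
  | Q (i : Fin n)
  | sP (i : Fin n)
  | sQ (i : Fin n)

/-- `(prev φ) ℓ w = φ_{ℓ−1}(w)` with the convention `φ_{−1} = 0`. -/
def prev {k σ : Type*} [Field k] (φ : ℕ → σ → k) : ℕ → σ → k
  | 0, _ => 0
  | ℓ + 1, w => φ ℓ w

variable (n : ℕ) (k : Type*) [Field k]

/-- The differential `d_1 : C¹ → C²`. -/
def d1 (φ : ℕ → S1 n → k) : ℕ → Shi n → k := fun ℓ w =>
  match w with
  | .P i => prev φ ℓ (.p i) + prev φ ℓ (.q i) - φ ℓ (.s i.succ)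
  | .Q i => prev φ ℓ (.q i) + prev φ ℓ (.p i) - φ ℓ (.s i.castSucc)
  | .sP i => φ ℓ (.s i.succ) - φ ℓ (.s i.castSucc)
  | .sQ i => φ ℓ (.s i.castSucc) - φ ℓ (.s i.succ)

/-- The differential `d_2 : C² → C³`. -/
def d2 (φ : ℕ → Shi n → k) : ℕ → Shi n → k := fun ℓ w =>
  match w with
  | .P i => φ ℓ (.P i) - φ ℓ (.Q i) + φ ℓ (.sP i)
  | .Q i => φ ℓ (.Q i) - φ ℓ (.P i) + φ ℓ (.sQ i)
  | .sP i => prev φ ℓ (.sP i) + prev φ ℓ (.sQ i)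
  | .sQ i => prev φ ℓ (.sQ i) + prev φ ℓ (.sP i)

/-- `d_1` as a `k`-linear map. -/
def d1L : (ℕ → S1 n → k) →ₗ[k] (ℕ → Shi n → k) where
  toFun := d1 n k
  map_add' φ ψ := by
    funext ℓ w
    cases w <;> cases ℓ <;> simp [d1, prev] <;> ring
  map_smul' c φ := by
    funext ℓ w
    cases w <;> cases ℓ <;> simp [d1, prev] <;> ring

/-- `d_2` as a `k`-linear map. -/
def d2L : (ℕ → Shi n → k) →ₗ[k] (ℕ → Shi n → k) where
  toFun := d2 n k
  map_add' φ ψ := by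
    funext ℓ w
    cases w <;> cases ℓ <;> simp [d2, prev] <;> ring
  map_smul' c φ := by
    funext ℓ w
    cases w <;> cases ℓ <;> simp [d2, prev] <;> ring

/-!
A 2-cocycle is free on its values at `P` and `Q`; those at `sP` and `sQ` are forced. In degrees
`ℓ ≥ 1` every such pair is a coboundary: `p`, `q` are free and the `s_j` are partial sums of
`Q − P`. In degree `0` only the vertex values `s_j` are available, so a coboundary satisfies
`P⁰_{i+1} = −s_{i+1} = Q⁰_{i+1}` at each of the `n − 1` interior vertices, and these are the only
obstructions.
-/

variable {n k}

@[simp]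
lemma d1L_apply (φ : ℕ → S1 n → k) : d1L n k φ = d1 n k φ := rfl

@[simp]
lemma d2L_apply (φ : ℕ → Shi n → k) : d2L n k φ = d2 n k φ := rfl

lemma d2L_comp_d1L : d2L n k ∘ₗ d1L n k = 0 := by
  ext ψ ℓ w
  cases w <;> cases ℓ <;> simp [d1, d2, prev] <;> ring

lemma mem_ker_d2L_iff {φ : ℕ → Shi n → k} :
    φ ∈ LinearMap.ker (d2L n k) ↔
      ∀ ℓ i, φ ℓ (.sP i) = φ ℓ (.Q i) - φ ℓ (.P i) ∧ φ ℓ (.sQ i) = φ ℓ (.P i) - φ ℓ (.Q i) := by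
  simp only [LinearMap.mem_ker, d2L_apply, funext_iff, Pi.zero_apply]
  constructor
  · intro h ℓ i
    have hP := h ℓ (.P i)
    have hQ := h ℓ (.Q i)
    simp only [d2] at hP hQ
    exact ⟨by linear_combination hP, by linear_combination hQ⟩
  · intro h ℓ w
    cases w <;> cases ℓ <;> simp [d2, prev, h]

lemma Fin.partialSum_sub_castSucc {M : Type*} [AddCommGroup M] {m : ℕ} {a b : Fin (m + 1) → M}
    (h : ∀ j : Fin m, a j.castSucc = b j.succ) (i : Fin (m + 1)) :
    Fin.partialSum (b - a) i.castSucc = b 0 - b i := by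
  induction i using Fin.induction with
  | zero => simp
  | succ j ih =>
    rw [← Fin.succ_castSucc, Fin.partialSum_succ, ih, Pi.sub_apply, h]
    abel

/-- In degree `0`, the defect at the interior vertex `s_{j+1}` between the two arrows `P_{j+1}`
and `Q_{j+1}` ending there. -/
def vertexMismatch (m : ℕ) : (ℕ → Shi (m + 1) → k) →ₗ[k] (Fin m → k) where
  toFun φ j := φ 0 (.P j.castSucc) - φ 0 (.Q j.succ)
  map_add' φ ψ := by ext; simp only [Pi.add_apply]; ring
  map_smul' c φ := by ext; simp only [Pi.smul_apply, smul_eq_mul, RingHom.id_apply]; ring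

variable {m : ℕ}

lemma vertexMismatch_d1L (ψ : ℕ → S1 (m + 1) → k) : vertexMismatch m (d1L (m + 1) k ψ) = 0 := by
  ext j
  simp [vertexMismatch, d1, prev]

lemma exists_potential_of_vertexMismatch_eq_zero {φ : ℕ → Shi (m + 1) → k}
    (h0 : vertexMismatch m φ = 0) :
    ∃ s : ℕ → Fin (m + 2) → k,
      (∀ ℓ i, s ℓ i.succ - s ℓ i.castSucc = φ ℓ (.Q i) - φ ℓ (.P i)) ∧
        ∀ i, s 0 i.castSucc = -φ 0 (.Q i) := by
  have hmatch (j : Fin m) : φ 0 (.P j.castSucc) = φ 0 (.Q j.succ) := sub_eq_zero.mp (congrFun h0 j)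
  refine ⟨fun ℓ j => Fin.partialSum (fun i => φ ℓ (.Q i) - φ ℓ (.P i)) j - φ ℓ (.Q 0),
    fun ℓ i => ?_, fun i => ?_⟩
  · dsimp only
    rw [Fin.partialSum_succ]
    ring
  · dsimp only
    rw [← Pi.sub_def, Fin.partialSum_sub_castSucc hmatch]
    ring

lemma mem_range_d1L_of_vertexMismatch_eq_zero {φ : ℕ → Shi (m + 1) → k}
    (hφ : φ ∈ LinearMap.ker (d2L (m + 1) k)) (h0 : vertexMismatch m φ = 0) :
    φ ∈ LinearMap.range (d1L (m + 1) k) := by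
  rw [mem_ker_d2L_iff] at hφ
  obtain ⟨s, hs, hs₀⟩ := exists_potential_of_vertexMismatch_eq_zero h0
  refine ⟨fun ℓ w => match w with
    | .s j => s ℓ j
    | .p i => φ (ℓ + 1) (.P i) + s (ℓ + 1) i.succ
    | .q _ => 0, ?_⟩
  ext ℓ w
  cases w with
  | P i =>
    cases ℓ with
    | zero => simp [d1, prev]; linear_combination -hs 0 i - hs₀ i
    | succ ℓ => simp [d1, prev]
  | Q i =>
    cases ℓ with
    | zero => simp [d1, prev]; linear_combination -hs₀ i
    | succ ℓ => simp [d1, prev]; linear_combination hs (ℓ + 1) i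
  | sP i => simp [d1, (hφ ℓ i).1, hs]
  | sQ i => simp [d1, (hφ ℓ i).2]; linear_combination -hs ℓ i

lemma exists_mem_ker_d2L_vertexMismatch_eq (v : Fin m → k) :
    ∃ φ ∈ LinearMap.ker (d2L (m + 1) k), vertexMismatch m φ = v := by
  set u : Fin (m + 1) → k := Fin.snoc v 0
  refine ⟨fun ℓ w => if ℓ = 0 then
    (match w with
      | .P i => u i
      | .Q _ => 0
      | .sP i => -u i
      | .sQ i => u i) else 0, ?_, ?_⟩
  · rw [mem_ker_d2L_iff]
    intro ℓ i
    split_ifs <;> simp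
  · ext j
    simp [vertexMismatch, u]

variable (n k)

/-- `range d_1 ⊆ ker d_2`, and the quotient `ker d_2 / range d_1` is finite dimensional
of dimension `n − 1`.  (This is the computation `HH²(Δ) ≅ k^{n−1}` for the diagonal
bimodule of the KLRW algebra with `n` punctures.) -/
theorem HH2_of_diagonal (hn : 0 < n) :
    LinearMap.range (d1L n k) ≤ LinearMap.ker (d2L n k) ∧
    Module.finrank k
        (LinearMap.ker (d2L n k) ⧸
          Submodule.comap (LinearMap.ker (d2L n k)).subtype (LinearMap.range (d1L n k)))
      = n - 1 := by
  refine ⟨LinearMap.range_le_ker_iff.mpr d2L_comp_d1L, ?_⟩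
  obtain ⟨m, rfl⟩ : ∃ m, n = m + 1 := ⟨n - 1, by omega⟩
  set K := LinearMap.ker (d2L (m + 1) k)
  set G := (vertexMismatch m).domRestrict K
  have hG : Submodule.comap K.subtype (LinearMap.range (d1L (m + 1) k)) = LinearMap.ker G := by
    ext ⟨φ, hφ⟩
    simp only [Submodule.mem_comap, Submodule.coe_subtype, LinearMap.mem_ker,
      LinearMap.domRestrict_apply, G]
    constructor
    · rintro ⟨ψ, rfl⟩
      exact vertexMismatch_d1L ψ
    · exact mem_range_d1L_of_vertexMismatch_eq_zero hφ
  have hG_surj : Function.Surjective G := fun v => by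
    obtain ⟨φ, hφ, rfl⟩ := exists_mem_ker_d2L_vertexMismatch_eq v
    exact ⟨⟨φ, hφ⟩, rfl⟩
  rw [hG, (G.quotKerEquivOfSurjective hG_surj).finrank_eq, Module.finrank_fin_fun,
    Nat.add_sub_cancel]
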